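/- Let A = (J - R) Q with J skew-symmetric, R symmetric positive semidefinite, Q symmetric positive definite. If λ is a purely imaginary eigenvalue of A with eigenvector v ∈ ℂ^n, then R Q v = 0. -/

import Mathlib

open Matrix
open scoped ComplexOrder

private lemma conj_quad {n : ℕ} (M : Matrix (Fin n) (Fin n) ℂ) (x : Fin n → ℂ) :
    star (star x ⬝ᵥ (M *ᵥ x)) = star x ⬝ᵥ (Mᴴ *ᵥ x) := by
  rw [← star_dotProduct, star_mulVec, ← dotProduct_mulVec]

private lemma map_complex_mul {n : ℕ} (M N : Matrix (Fin n) (Fin n) ℝ) :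
    (M * N).map Complex.ofReal = M.map Complex.ofReal * N.map Complex.ofReal := by
  ext i j
  simp only [map_apply, mul_apply]
  push_cast
  rfl

private lemma psd_map_complex {n : ℕ} {R : Matrix (Fin n) (Fin n) ℝ} (hR : R.PosSemidef) :
    (R.map (Complex.ofReal)).PosSemidef := by
  open MatrixOrder in
  obtain ⟨B, rfl⟩ := CStarAlgebra.nonneg_iff_eq_star_mul_self.mp hR.nonneg
  rw [star_eq_conjTranspose, map_complex_mul,
    conjTranspose_map (A := B) _ (fun a => (Complex.conj_ofReal a).symm)]
  exact posSemidef_conjTranspose_mul_self _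

theorem imaginary_eigenvalue_kernel (n : ℕ)
    (J R Q : Matrix (Fin n) (Fin n) ℝ)
    (hJ : Jᵀ = -J) (hR : R.PosSemidef) (hQ : Q.PosDef)
    (lam : ℂ) (hlam : lam.re = 0)
    (v : Fin n → ℂ) (hv : v ≠ 0)
    (heig : (((J - R) * Q).map (Complex.ofReal)) *ᵥ v = lam • v) :
    ((R * Q).map (Complex.ofReal)) *ᵥ v = 0 := by
  set Jc := J.map Complex.ofReal with hJc
  set Rc := R.map Complex.ofReal with hRc
  set Qc := Q.map Complex.ofReal with hQc
  have hmapsub : (J - R).map Complex.ofReal = Jc - Rc := by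
    ext i j; simp [Jc, Rc]
  have hmap : ((J - R) * Q).map Complex.ofReal = (Jc - Rc) * Qc := by
    rw [map_complex_mul, hmapsub]
  have hmapRQ : (R * Q).map Complex.ofReal = Rc * Qc := map_complex_mul R Q
  set w := Qc *ᵥ v with hw
  have hRch : Rcᴴ = Rc := (psd_map_complex hR).isHermitian
  have hQch : Qcᴴ = Qc := by
    rw [hQc, ← conjTranspose_map _ (fun a => (Complex.conj_ofReal a).symm),
      hQ.isHermitian]
  have hJch : Jcᴴ = -Jc := by
    rw [hJc, ← conjTranspose_map _ (fun a => (Complex.conj_ofReal a).symm),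
      conjTranspose_eq_transpose_of_trivial, hJ]
    ext i j; simp
  set s := star w ⬝ᵥ (Jc *ᵥ w) with hs
  set t := star w ⬝ᵥ (Rc *ᵥ w) with ht
  set c := star w ⬝ᵥ v with hc
  have hsre : s.re = 0 := by
    have h0 := conj_quad Jc w
    rw [hJch, neg_mulVec, dotProduct_neg] at h0
    have h2 := congrArg Complex.re h0
    simp only [Complex.star_def, Complex.conj_re, Complex.neg_re] at h2
    rw [← hs] at h2
    linarith
  have htreal : t.im = 0 := by
    have h0 := conj_quad Rc w
    rw [hRch, ← ht] at h0
    have h2 := congrArg Complex.im h0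
    simp only [Complex.star_def, Complex.conj_im] at h2
    linarith
  have htnonneg : 0 ≤ t.re := (psd_map_complex hR).re_dotProduct_nonneg w
  have hcreal : c.im = 0 := by
    have hq := conj_quad Qc v
    rw [hQch] at hq
    have h1 : c = star (star v ⬝ᵥ (Qc *ᵥ v)) := by
      rw [hc, hw]; exact star_dotProduct _ _
    have h2 := congrArg Complex.im hq
    have h3 := congrArg Complex.im h1
    simp only [Complex.star_def, Complex.conj_im] at h2 h3
    linarith
  have hquad : s - t = lam * c := by
    have h1 : star w ⬝ᵥ (((Jc - Rc) * Qc) *ᵥ v) = star w ⬝ᵥ (lam • v) := by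
      rw [← hmap, heig]
    rw [← mulVec_mulVec, ← hw, sub_mulVec, dotProduct_sub, dotProduct_smul] at h1
    simpa [← hs, ← ht, ← hc, smul_eq_mul] using h1
  have htre0 : t.re = 0 := by
    have h2 := congrArg Complex.re hquad
    simp only [Complex.sub_re, Complex.mul_re, hsre, hlam, hcreal] at h2
    simp at h2
    linarith
  have ht0 : star w ⬝ᵥ Rc *ᵥ w = 0 := by
    rw [← ht]; exact Complex.ext htre0 htreal
  have hRw : Rc *ᵥ w = 0 :=
    ((psd_map_complex hR).dotProduct_mulVec_zero_iff w).mp ht0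
  rw [hmapRQ, ← Matrix.mulVec_mulVec, ← hw, hRw]
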